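/- arXiv:1305.6061 — 3 statements merged into one kernel-verified Lean document; each statement's English description precedes it below -/
import Mathlib

section
/- Fix β > 0 and L > 0. Let κ₁, κ₂ : [0,L] → ℝ be continuously differentiable, let K(s) be the 3×3 skew-symmetric matrix [[0,0,κ₁(s)],[0,0,κ₂(s)],[−κ₁(s),−κ₂(s),0]], and let R : [0,L] → ℝ^{3×3} be twice continuously differentiable with R(s) in the special orthogonal group SO(3) for every s and R'(s) = R(s)·K(s). Let x : [0,L] → ℝ³ satisfy x'(s) = R(s)·e₃, where e₃ = (0,0,1)ᵀ. Set κ(s) := √(κ₁(s)² + κ₂(s)²), wᵢ(s) := κᵢ(s)/√(κ(s)² + β²) for i = 1,2, and W(s) := w₁(s)w₂'(s) − w₂(s)w₁'(s). Then for all s ∈ [0,L]: ‖x''(s) × x'''(s)‖² = κ(s)⁶ + (κ(s)² + β²)² W(s)². Consequently, ‖x''(s)‖ = κ(s), and whenever κ(s) > 0 and W(s) ≠ 0 the curvature of the tangent indicatrix, ‖x''(s) × x'''(s)‖ / ‖x''(s)‖³, is strictly greater than 1. -/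
/-!
Differentiating `x' = R e₃` twice with `R' = R K` gives `x'' = R (κ₁, κ₂, 0)` and
`x''' = R (κ₁', κ₂', -κ²)`. Since `R` is orthogonal, the Lagrange identity
`‖a × b‖² = ‖a‖²‖b‖² - ⟪a, b⟫²` shows that `R` does not change `‖x'' × x'''‖²`, which is therefore
`κ⁶ + (κ₁κ₂' - κ₂κ₁')²`. Dividing `κ₁, κ₂` by `√(κ² + β²)` divides their Wronskian
`κ₁κ₂' - κ₂κ₁'` by `κ² + β²`, so the latter equals `(κ² + β²) W`.
-/

/-- The cross product on `ℝ³ = EuclideanSpace ℝ (Fin 3)`. -/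
noncomputable def cross3 (a b : EuclideanSpace ℝ (Fin 3)) : EuclideanSpace ℝ (Fin 3) :=
  (WithLp.equiv 2 (Fin 3 → ℝ)).symm
    ![a 1 * b 2 - a 2 * b 1, a 2 * b 0 - a 0 * b 2, a 0 * b 1 - a 1 * b 0]

open Matrix WithLp

theorem cross3_eq_toLp_cross (a b : EuclideanSpace ℝ (Fin 3)) :
    cross3 a b = toLp 2 (ofLp a ⨯₃ ofLp b) := by
  rw [cross_apply]; rfl

theorem EuclideanSpace.norm_toLp_sq {n : Type*} [Fintype n] (v : n → ℝ) :
    ‖toLp 2 v‖ ^ 2 = v ⬝ᵥ v := by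
  rw [← real_inner_self_eq_norm_sq, EuclideanSpace.inner_eq_star_dotProduct]
  simp

theorem Matrix.mulVec_dotProduct_mulVec_of_mem_orthogonalGroup {n : Type*} [Fintype n]
    [DecidableEq n] {R : Matrix n n ℝ} (hR : R ∈ orthogonalGroup n ℝ) (a b : n → ℝ) :
    R *ᵥ a ⬝ᵥ R *ᵥ b = a ⬝ᵥ b := by
  rw [dotProduct_mulVec, ← mulVec_transpose, mulVec_mulVec, (mem_orthogonalGroup_iff' n ℝ).1 hR,
    one_mulVec]

theorem hasDerivAt_mulVec {m n : Type*} [Fintype m] [Fintype n] {A : ℝ → Matrix m n ℝ}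
    {A' : Matrix m n ℝ} {v : ℝ → n → ℝ} {v' : n → ℝ} {s : ℝ}
    (hA : ∀ i j, HasDerivAt (fun σ => A σ i j) (A' i j) s) (hv : HasDerivAt v v' s) :
    HasDerivAt (fun σ => A σ *ᵥ v σ) (A' *ᵥ v s + A s *ᵥ v') s := by
  refine hasDerivAt_pi.2 fun i => ?_
  have := HasDerivAt.fun_sum (u := Finset.univ) fun j _ => (hA i j).mul (hasDerivAt_pi.1 hv j)
  simpa [mulVec, dotProduct, Finset.sum_add_distrib] using this

theorem hasDerivAt_toLp_comp {n : Type*} [Fintype n] {f : ℝ → n → ℝ} {f' : n → ℝ} {s : ℝ}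
    (hf : HasDerivAt f f' s) : HasDerivAt (fun σ => toLp 2 (f σ)) (toLp 2 f') s :=
  (PiLp.hasFDerivAt_toLp 2 (f s)).comp_hasDerivAt s hf

theorem hasDerivAt_vec3 {f g h : ℝ → ℝ} {f' g' h' s : ℝ} (hf : HasDerivAt f f' s)
    (hg : HasDerivAt g g' s) (hh : HasDerivAt h h' s) :
    HasDerivAt (fun σ => ![f σ, g σ, h σ]) ![f', g', h'] s := by
  refine hasDerivAt_pi.2 fun i => ?_
  fin_cases i <;> assumption

theorem wronskian_div {f g n : ℝ → ℝ} {s : ℝ} (hf : DifferentiableAt ℝ f s)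
    (hg : DifferentiableAt ℝ g s) (hn : DifferentiableAt ℝ n s) (hn0 : n s ≠ 0) :
    f s / n s * deriv (fun σ => g σ / n σ) s - g s / n s * deriv (fun σ => f σ / n σ) s
      = (f s * deriv g s - g s * deriv f s) / n s ^ 2 := by
  rw [deriv_fun_div hg hn hn0, deriv_fun_div hf hn hn0]
  field_simp
  ring

theorem hasDerivAt_toLp_mulVec_of_frame {n : Type*} [Fintype n]
    {R : ℝ → Matrix n n ℝ} {K : Matrix n n ℝ} {v : ℝ → n → ℝ} {v' : n → ℝ} {s : ℝ}
    (hR : ∀ i j, HasDerivAt (fun σ => R σ i j) ((R s * K) i j) s) (hv : HasDerivAt v v' s) :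
    HasDerivAt (fun σ => toLp 2 (R σ *ᵥ v σ)) (toLp 2 (R s *ᵥ (K *ᵥ v s + v'))) s := by
  convert hasDerivAt_toLp_comp (hasDerivAt_mulVec hR hv) using 2
  rw [mulVec_add, mulVec_mulVec]

theorem hasDerivAt_deriv_of_eventually_hasDerivAt {E : Type*} [NormedAddCommGroup E]
    [NormedSpace ℝ E] {f g : ℝ → E} {g' : E} {s : ℝ}
    (hf : ∀ᶠ σ in nhds s, HasDerivAt f (g σ) σ) (hg : HasDerivAt g g' s) :
    HasDerivAt (deriv f) g' s :=
  hg.congr_of_eventuallyEq (hf.mono fun _ hσ => hσ.deriv)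

theorem hasDerivAt_deriv_of_frame {κ₁ κ₂ : ℝ → ℝ} {U : Set ℝ} (hU : IsOpen U)
    {K R : ℝ → Matrix (Fin 3) (Fin 3) ℝ}
    (hK : ∀ s, K s = !![0, 0, κ₁ s; 0, 0, κ₂ s; -κ₁ s, -κ₂ s, 0])
    (hR' : ∀ s ∈ U, ∀ i j, HasDerivAt (fun σ => R σ i j) ((R s * K s) i j) s)
    {x : ℝ → EuclideanSpace ℝ (Fin 3)}
    (hx : ∀ s ∈ U, HasDerivAt x (toLp 2 (R s *ᵥ ![0, 0, 1])) s) {s : ℝ} (hs : s ∈ U) :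
    HasDerivAt (deriv x) (toLp 2 (R s *ᵥ ![κ₁ s, κ₂ s, 0])) s := by
  have hKe₃ : K s *ᵥ ![0, 0, 1] + 0 = ![κ₁ s, κ₂ s, 0] := by
    ext i; fin_cases i <;> simp [hK]
  rw [← hKe₃]
  exact hasDerivAt_deriv_of_eventually_hasDerivAt (Filter.eventually_of_mem (hU.mem_nhds hs) hx)
    (hasDerivAt_toLp_mulVec_of_frame (hR' s hs) (hasDerivAt_const s _))

theorem hasDerivAt_deriv_deriv_of_frame {κ₁ κ₂ : ℝ → ℝ} {U : Set ℝ} (hU : IsOpen U)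
    {K R : ℝ → Matrix (Fin 3) (Fin 3) ℝ}
    (hK : ∀ s, K s = !![0, 0, κ₁ s; 0, 0, κ₂ s; -κ₁ s, -κ₂ s, 0])
    (hR' : ∀ s ∈ U, ∀ i j, HasDerivAt (fun σ => R σ i j) ((R s * K s) i j) s)
    {x : ℝ → EuclideanSpace ℝ (Fin 3)}
    (hx : ∀ s ∈ U, HasDerivAt x (toLp 2 (R s *ᵥ ![0, 0, 1])) s) {s : ℝ} (hs : s ∈ U)
    (hκ₁ : DifferentiableAt ℝ κ₁ s) (hκ₂ : DifferentiableAt ℝ κ₂ s) :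
    HasDerivAt (deriv (deriv x))
      (toLp 2 (R s *ᵥ ![deriv κ₁ s, deriv κ₂ s, -(κ₁ s ^ 2 + κ₂ s ^ 2)])) s := by
  have hk : HasDerivAt (fun σ => ![κ₁ σ, κ₂ σ, 0]) ![deriv κ₁ s, deriv κ₂ s, 0] s :=
    hasDerivAt_vec3 hκ₁.hasDerivAt hκ₂.hasDerivAt (hasDerivAt_const s 0)
  have hKk : K s *ᵥ ![κ₁ s, κ₂ s, 0] + ![deriv κ₁ s, deriv κ₂ s, 0]
      = ![deriv κ₁ s, deriv κ₂ s, -(κ₁ s ^ 2 + κ₂ s ^ 2)] := by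
    ext i; fin_cases i <;> simp [hK]; ring
  rw [← hKk]
  exact hasDerivAt_deriv_of_eventually_hasDerivAt
    (Filter.eventually_of_mem (hU.mem_nhds hs) fun _ hσ => hasDerivAt_deriv_of_frame hU hK hR' hx hσ)
    (hasDerivAt_toLp_mulVec_of_frame (hR' s hs) hk)

theorem wronskian_div_sqrt {f g : ℝ → ℝ} {c s : ℝ} (hc : 0 < c) (hf : DifferentiableAt ℝ f s)
    (hg : DifferentiableAt ℝ g s) :
    f s / √(f s ^ 2 + g s ^ 2 + c) * deriv (fun σ => g σ / √(f σ ^ 2 + g σ ^ 2 + c)) s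
      - g s / √(f s ^ 2 + g s ^ 2 + c) * deriv (fun σ => f σ / √(f σ ^ 2 + g σ ^ 2 + c)) s
      = (f s * deriv g s - g s * deriv f s) / (f s ^ 2 + g s ^ 2 + c) := by
  have hpos : 0 < f s ^ 2 + g s ^ 2 + c := by positivity
  have hn : DifferentiableAt ℝ (fun σ => √(f σ ^ 2 + g σ ^ 2 + c)) s :=
    ((hf.pow 2).add (hg.pow 2)).add_const c |>.sqrt hpos.ne'
  rw [wronskian_div hf hg hn (Real.sqrt_pos.2 hpos).ne', Real.sq_sqrt hpos.le]

theorem norm_cross3_toLp_mulVec_sq {R : Matrix (Fin 3) (Fin 3) ℝ}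
    (hR : R ∈ orthogonalGroup (Fin 3) ℝ) (a b : Fin 3 → ℝ) :
    ‖cross3 (toLp 2 (R *ᵥ a)) (toLp 2 (R *ᵥ b))‖ ^ 2 = a ⨯₃ b ⬝ᵥ a ⨯₃ b := by
  rw [cross3_eq_toLp_cross, EuclideanSpace.norm_toLp_sq, ofLp_toLp, ofLp_toLp]
  simp only [cross_dot_cross, mulVec_dotProduct_mulVec_of_mem_orthogonalGroup hR]

theorem stmt_16_general (β L : ℝ) (hβ : 0 < β)
    (κ₁ κ₂ : ℝ → ℝ)
    (U : Set ℝ) (hU : IsOpen U) (hUL : Set.Icc 0 L ⊆ U)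
    (hκ₁ : ContDiffOn ℝ 1 κ₁ U) (hκ₂ : ContDiffOn ℝ 1 κ₂ U)
    (K : ℝ → Matrix (Fin 3) (Fin 3) ℝ)
    (hK : ∀ s, K s = !![0, 0, κ₁ s; 0, 0, κ₂ s; -κ₁ s, -κ₂ s, 0])
    (R : ℝ → Matrix (Fin 3) (Fin 3) ℝ)
    (hRSO : ∀ s ∈ U, R s ∈ Matrix.specialOrthogonalGroup (Fin 3) ℝ)
    (hR' : ∀ s ∈ U, ∀ i j, HasDerivAt (fun σ => R σ i j) ((R s * K s) i j) s)
    (x : ℝ → EuclideanSpace ℝ (Fin 3))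
    (hx : ∀ s ∈ U, HasDerivAt x
      ((WithLp.equiv 2 (Fin 3 → ℝ)).symm ((R s).mulVec ![0, 0, 1])) s)
    (κ w₁ w₂ Wr : ℝ → ℝ)
    (hκ : ∀ s, κ s = Real.sqrt (κ₁ s ^ 2 + κ₂ s ^ 2))
    (hw₁ : ∀ s, w₁ s = κ₁ s / Real.sqrt (κ s ^ 2 + β ^ 2))
    (hw₂ : ∀ s, w₂ s = κ₂ s / Real.sqrt (κ s ^ 2 + β ^ 2))
    (hWr : ∀ s, Wr s = w₁ s * deriv w₂ s - w₂ s * deriv w₁ s) :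
    ∀ s ∈ Set.Icc (0 : ℝ) L,
      ‖cross3 (deriv (deriv x) s) (deriv (deriv (deriv x)) s)‖ ^ 2
        = κ s ^ 6 + (κ s ^ 2 + β ^ 2) ^ 2 * Wr s ^ 2 ∧
      ‖deriv (deriv x) s‖ = κ s ∧
      (0 < κ s → Wr s ≠ 0 →
        1 < ‖cross3 (deriv (deriv x) s) (deriv (deriv (deriv x)) s)‖
              / ‖deriv (deriv x) s‖ ^ 3) := by
  intro s hs
  have hsU : s ∈ U := hUL hs
  have hO : R s ∈ orthogonalGroup (Fin 3) ℝ := (hRSO s hsU).1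
  have hκ₁s := (hκ₁.differentiableOn one_ne_zero).differentiableAt (hU.mem_nhds hsU)
  have hκ₂s := (hκ₂.differentiableOn one_ne_zero).differentiableAt (hU.mem_nhds hsU)
  have hκsq : ∀ σ, κ σ ^ 2 = κ₁ σ ^ 2 + κ₂ σ ^ 2 := fun σ => by
    rw [hκ, Real.sq_sqrt (by positivity)]
  have hx₂ := (hasDerivAt_deriv_of_frame hU hK hR' hx hsU).deriv
  have hx₃ := (hasDerivAt_deriv_deriv_of_frame hU hK hR' hx hsU hκ₁s hκ₂s).deriv
  have hW : Wr s = (κ₁ s * deriv κ₂ s - κ₂ s * deriv κ₁ s) / (κ s ^ 2 + β ^ 2) := by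
    rw [hWr, funext hw₁, funext hw₂]
    simp only [hκsq]
    exact wronskian_div_sqrt (pow_pos hβ 2) hκ₁s hκ₂s
  have hnorm : ‖deriv (deriv x) s‖ = κ s := by
    rw [hx₂, hκ, ← Real.sqrt_sq (norm_nonneg _), EuclideanSpace.norm_toLp_sq,
      mulVec_dotProduct_mulVec_of_mem_orthogonalGroup hO]
    simp [sq]
  have hcross : ‖cross3 (deriv (deriv x) s) (deriv (deriv (deriv x)) s)‖ ^ 2
      = κ s ^ 6 + (κ s ^ 2 + β ^ 2) ^ 2 * Wr s ^ 2 := by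
    rw [hx₂, hx₃, norm_cross3_toLp_mulVec_sq hO, hW, div_pow, mul_div_cancel₀ _ (by positivity),
      show κ s ^ 6 = (κ s ^ 2) ^ 3 by ring, hκsq]
    simp only [cross_apply, vec3_dotProduct, cons_val_zero, cons_val_one, cons_val]
    ring
  refine ⟨hcross, hnorm, fun hκpos hW0 => ?_⟩
  rw [hnorm, one_lt_div (by positivity)]
  refine lt_of_pow_lt_pow_left₀ 2 (norm_nonneg _) ?_
  rw [hcross]
  have : 0 < (κ s ^ 2 + β ^ 2) ^ 2 * Wr s ^ 2 := by positivity
  linarith [show (κ s ^ 3) ^ 2 = κ s ^ 6 by ring]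

/-- for a horizontal lift with rotating frame `R ∈ SO(3)`,
`R' = R·K(s)` (with `K` the skew matrix built from `κ₁, κ₂`), and spatial curve
`x' = R e₃`, one has `‖x'' × x'''‖² = κ⁶ + (κ² + β²)² W²` where
`κ = √(κ₁² + κ₂²)`, `wᵢ = κᵢ/√(κ² + β²)` and `W = w₁w₂' − w₂w₁'`; consequently
`‖x''‖ = κ`, and if `κ > 0` and `W ≠ 0` the curvature of the tangent indicatrix
`‖x'' × x'''‖/‖x''‖³` exceeds `1`. -/
theorem stmt_16 (β L : ℝ) (hβ : 0 < β) (hL : 0 < L)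
    (κ₁ κ₂ : ℝ → ℝ)
    (U : Set ℝ) (hU : IsOpen U) (hUL : Set.Icc 0 L ⊆ U)
    (hκ₁ : ContDiffOn ℝ 1 κ₁ U) (hκ₂ : ContDiffOn ℝ 1 κ₂ U)
    (K : ℝ → Matrix (Fin 3) (Fin 3) ℝ)
    (hK : ∀ s, K s = !![0, 0, κ₁ s; 0, 0, κ₂ s; -κ₁ s, -κ₂ s, 0])
    (R : ℝ → Matrix (Fin 3) (Fin 3) ℝ)
    (hRsmooth : ∀ i j, ContDiffOn ℝ 2 (fun s => R s i j) U)
    (hRSO : ∀ s ∈ U, R s ∈ Matrix.specialOrthogonalGroup (Fin 3) ℝ)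
    (hR' : ∀ s ∈ U, ∀ i j, HasDerivAt (fun σ => R σ i j) ((R s * K s) i j) s)
    (x : ℝ → EuclideanSpace ℝ (Fin 3))
    (hx : ∀ s ∈ U, HasDerivAt x
      ((WithLp.equiv 2 (Fin 3 → ℝ)).symm ((R s).mulVec ![0, 0, 1])) s)
    (κ w₁ w₂ Wr : ℝ → ℝ)
    (hκ : ∀ s, κ s = Real.sqrt (κ₁ s ^ 2 + κ₂ s ^ 2))
    (hw₁ : ∀ s, w₁ s = κ₁ s / Real.sqrt (κ s ^ 2 + β ^ 2))
    (hw₂ : ∀ s, w₂ s = κ₂ s / Real.sqrt (κ s ^ 2 + β ^ 2))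
    (hWr : ∀ s, Wr s = w₁ s * deriv w₂ s - w₂ s * deriv w₁ s) :
    ∀ s ∈ Set.Icc (0 : ℝ) L,
      ‖cross3 (deriv (deriv x) s) (deriv (deriv (deriv x)) s)‖ ^ 2
        = κ s ^ 6 + (κ s ^ 2 + β ^ 2) ^ 2 * Wr s ^ 2 ∧
      ‖deriv (deriv x) s‖ = κ s ∧
      (0 < κ s → Wr s ≠ 0 →
        1 < ‖cross3 (deriv (deriv x) s) (deriv (deriv (deriv x)) s)‖
              / ‖deriv (deriv x) s‖ ^ 3) :=
  stmt_16_general β L hβ κ₁ κ₂ U hU hUL hκ₁ hκ₂ K hK R hRSO hR' x hx κ w₁ w₂ Wr hκ hw₁ hw₂ hWr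
end

section
/- Let w : ℝ → ℝ² be a normalized-curvature trajectory (i.e., twice continuously differentiable with w''(s) = β² w(s) for all s) with ‖w(0)‖ = 1 and Wronskian W = 0. If s ≥ 0 and ‖w(σ)‖ ≤ 1 for all σ ∈ [0,s], then (w(s) − w(0)) · w'(0) ≥ 0. -/
/-!
Since the Wronskian vanishes and `‖w 0‖ = 1`, the initial velocity is radial:
`w' 0 = c • w 0` with `c = ⟪w 0, w' 0⟫`, so `⟪w s - w 0, w' 0⟫ = c (⟪w s, w 0⟫ - 1)`.
The second factor is `≤ 0` by Cauchy–Schwarz, and so is `c`, because `‖w‖²` has a one-sided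
maximum at `0` on `[0, s]`, whence its right derivative `2c` there is nonpositive.
-/

open RealInnerProductSpace Set

theorem inner_deriv_nonpos_of_norm_le {F : Type*} [NormedAddCommGroup F]
    [InnerProductSpace ℝ F] {f : ℝ → F} {a b : ℝ} (hf : DifferentiableAt ℝ f a) (hab : a < b)
    (hle : ∀ t ∈ Icc a b, ‖f t‖ ≤ ‖f a‖) : ⟪f a, deriv f a⟫ ≤ 0 := by
  have hmax : IsLocalMaxOn (‖f ·‖ ^ 2) (Icc a b) a :=
    eventually_mem_nhdsWithin.mono fun t ht ↦ pow_le_pow_left₀ (norm_nonneg _) (hle t ht) 2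
  have hcone : b - a ∈ posTangentConeAt (Icc a b) a :=
    sub_mem_posTangentConeAt_of_segment_subset (segment_eq_Icc hab.le).subset
  have := hmax.hasFDerivWithinAt_nonpos
    hf.hasDerivAt.norm_sq.hasDerivWithinAt.hasFDerivWithinAt hcone
  rw [ContinuousLinearMap.toSpanSingleton_apply, smul_eq_mul] at this
  nlinarith

theorem norm_sq_smul_eq_inner_smul_of_cross_eq_zero {u v : EuclideanSpace ℝ (Fin 2)}
    (h : u 0 * v 1 - u 1 * v 0 = 0) : ‖u‖ ^ 2 • v = ⟪u, v⟫ • u := by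
  rw [← real_inner_self_eq_norm_sq]
  ext i
  fin_cases i
  · simp only [PiLp.inner_apply, Fin.sum_univ_two, PiLp.smul_apply, smul_eq_mul,
      RCLike.inner_apply, conj_trivial, Fin.zero_eta]
    linear_combination (-u 1) * h
  · simp only [PiLp.inner_apply, Fin.sum_univ_two, PiLp.smul_apply, smul_eq_mul,
      RCLike.inner_apply, conj_trivial, Fin.mk_one]
    linear_combination u 0 * h

theorem stmt_17_general
    (w : ℝ → EuclideanSpace ℝ (Fin 2)) (hw : ContDiff ℝ 2 w)
    (hw0 : ‖w 0‖ = 1)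
    (hW : (w 0) 0 * (deriv w 0) 1 - (w 0) 1 * (deriv w 0) 0 = 0)
    (s : ℝ) (hs : 0 ≤ s)
    (hw1 : ∀ σ ∈ Set.Icc 0 s, ‖w σ‖ ≤ 1) :
    0 ≤ (inner ℝ (w s - w 0) (deriv w 0) : ℝ) := by
  rcases hs.eq_or_lt with rfl | hs
  · simp
  set u := w 0
  set v := deriv w 0
  have hv : v = ⟪u, v⟫ • u := by
    simpa [hw0] using norm_sq_smul_eq_inner_smul_of_cross_eq_zero hW
  have hc : ⟪u, v⟫ ≤ 0 :=
    inner_deriv_nonpos_of_norm_le (hw.differentiable two_ne_zero 0) hs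
      fun t ht ↦ (hw1 t ht).trans hw0.ge
  have hsu : ⟪w s, u⟫ ≤ 1 := (real_inner_le_norm _ _).trans <| by
    rw [hw0, mul_one]
    exact hw1 s ⟨hs.le, le_rfl⟩
  rw [hv, inner_smul_right, inner_sub_left, real_inner_self_eq_norm_sq, hw0, one_pow]
  exact mul_nonneg_of_nonpos_of_nonpos hc (by linarith)

/-- A normalized-curvature trajectory `w` (a C² curve in ℝ² with
`w'' = β² w`) with `‖w(0)‖ = 1` and vanishing Wronskian satisfies
`(w(s) − w(0))·w'(0) ≥ 0` whenever `s ≥ 0` and `‖w‖ ≤ 1` on `[0,s]`. -/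
theorem stmt_17 (β : ℝ) (hβ : 0 < β)
    (w : ℝ → EuclideanSpace ℝ (Fin 2)) (hw : ContDiff ℝ 2 w)
    (hODE : ∀ s : ℝ, deriv (deriv w) s = β ^ 2 • w s)
    (hw0 : ‖w 0‖ = 1)
    (hW : (w 0) 0 * (deriv w 0) 1 - (w 0) 1 * (deriv w 0) 0 = 0)
    (s : ℝ) (hs : 0 ≤ s)
    (hw1 : ∀ σ ∈ Set.Icc 0 s, ‖w σ‖ ≤ 1) :
    0 ≤ (inner ℝ (w s - w 0) (deriv w 0) : ℝ) :=
  stmt_17_general w hw hw0 hW s hs hw1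
end

section
/- Let w : ℝ → ℝ² be a normalized-curvature trajectory (i.e., twice continuously differentiable with w''(s) = β² w(s) for all s) with ‖w(0)‖ = 1, w(0)·w'(0) < 0, Wronskian W ≠ 0 and 𝔠 > 0. Let s > 0 be such that for all σ ∈ [0,s]: ‖w(σ)‖ ≤ 1 and 𝔠²β² ‖w(σ)‖² > W². Define φ(s) := ∫₀ˢ (W/(𝔠β)) √(𝔠²β² − ‖w'(σ)‖²) / (‖w(σ)‖² − W²/(𝔠²β²)) dσ. Then √( (‖w(s)‖² − W²/(𝔠²β²)) / (1 − W²/(𝔠²β²)) ) · cos φ(s) < 1. (This expresses that a cuspless sub-Riemannian geodesic departing from a cusp has strictly positive z-component for 0 < s ≤ s_max when W ≠ 0.) -/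
/-!
Write `F = ‖w‖²`, `P = ⟪w, w'⟫` and `k = W / (𝔠β)`. The ODE gives `F' = 2P` and, through the
conserved energy `β²‖w‖² - ‖w'‖²`, `P' = β²(2F - 1 + 𝔠²)`; the plane identity
`⟪u, v⟫² + (u × v)² = ‖u‖²‖v‖²` and the constancy of the Wronskian give
`P² + k²𝔠²β² = β²F(F - 1 + 𝔠²)`.

If `‖w(s)‖ < 1` the square-root factor is already below `1`. Otherwise the claim is `cos φ(s) < 1`.
On `(0, s)` we have `F < 1`, since an interior point with `F = 1` would be a maximum of `F`, where
`P = 0` and the identity above forces `k² = 1`. So the integrand has the sign of `W` there, and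
`φ(s) ≠ 0`. Moreover the derivative of the angle `arctan (P / (|k|β√(1 - F)))` dominates the
absolute value of the integrand, and this angle extends continuously to `[0, s]` as
`arcsin (P / √(P² + k²β²(1 - F)))`, with values in `[-π/2, π/2]`; hence `|φ(s)| ≤ π`.
-/

open Real Set

theorem sub_le_sub_of_deriv_le {f g f' g' : ℝ → ℝ} {a b : ℝ} (hab : a ≤ b)
    (hf : ContinuousOn f (Icc a b)) (hg : ContinuousOn g (Icc a b))
    (hf' : ∀ x ∈ Ioo a b, HasDerivAt f (f' x) x) (hg' : ∀ x ∈ Ioo a b, HasDerivAt g (g' x) x)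
    (hle : ∀ x ∈ Ioo a b, f' x ≤ g' x) : f b - f a ≤ g b - g a := by
  have hmono : MonotoneOn (fun x => g x - f x) (Icc a b) := by
    refine monotoneOn_of_hasDerivWithinAt_nonneg (convex_Icc a b) (hg.sub hf)
      (f' := fun x => g' x - f' x) (fun x hx => ?_) (fun x hx => ?_) <;> rw [interior_Icc] at hx
    · exact ((hg' x hx).sub (hf' x hx)).hasDerivWithinAt
    · exact sub_nonneg.2 (hle x hx)
  linarith [hmono (left_mem_Icc.2 hab) (right_mem_Icc.2 hab) hab]

theorem abs_sub_le_sub_of_abs_deriv_le {f g f' g' : ℝ → ℝ} {a b : ℝ} (hab : a ≤ b)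
    (hf : ContinuousOn f (Icc a b)) (hg : ContinuousOn g (Icc a b))
    (hf' : ∀ x ∈ Ioo a b, HasDerivAt f (f' x) x) (hg' : ∀ x ∈ Ioo a b, HasDerivAt g (g' x) x)
    (hle : ∀ x ∈ Ioo a b, |f' x| ≤ g' x) : |f b - f a| ≤ g b - g a := by
  refine abs_sub_le_iff.2 ⟨?_, ?_⟩
  · exact sub_le_sub_of_deriv_le hab hf hg hf' hg' fun x hx => (le_abs_self _).trans (hle x hx)
  · have := sub_le_sub_of_deriv_le (f := fun x => -f x) hab hf.neg hg
      (fun x hx => (hf' x hx).neg) hg' fun x hx => (neg_le_abs _).trans (hle x hx)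
    linarith

theorem hasDerivAt_integral_of_continuousOn {g : ℝ → ℝ} {a b x : ℝ}
    (hg : ContinuousOn g (Icc a b)) (hx : x ∈ Ioo a b) :
    HasDerivAt (fun t => ∫ u in a..t, g u) (g x) x :=
  intervalIntegral.integral_hasDerivAt_right
    ((hg.mono (Icc_subset_Icc le_rfl hx.2.le)).intervalIntegrable_of_Icc hx.1.le)
    ((hg.mono Ioo_subset_Icc_self).stronglyMeasurableAtFilter isOpen_Ioo x hx)
    (hg.continuousAt (Icc_mem_nhds hx.1 hx.2))

theorem continuousOn_integral_of_continuousOn {g : ℝ → ℝ} {a b : ℝ} (hab : a ≤ b)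
    (hg : ContinuousOn g (Icc a b)) : ContinuousOn (fun t => ∫ u in a..t, g u) (Icc a b) := by
  have := intervalIntegral.continuousOn_primitive_interval (μ := MeasureTheory.volume)
    (a := a) (b := b) (f := g) (by rw [uIcc_of_le hab]; exact hg.integrableOn_Icc)
  rwa [uIcc_of_le hab] at this

theorem arctan_div_eq_arcsin {x y : ℝ} (hy : 0 < y) :
    arctan (x / y) = arcsin (x / √(x ^ 2 + y ^ 2)) := by
  rw [arctan_eq_arcsin]
  congr 1
  have h : √(1 + (x / y) ^ 2) = √(x ^ 2 + y ^ 2) / y := by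
    rw [eq_div_iff hy.ne', ← sqrt_sq hy.le, ← sqrt_mul (by positivity), sqrt_sq hy.le]
    congr 1
    field_simp
    ring
  rw [h]
  field_simp

theorem cos_lt_one_of_abs_le_pi {x : ℝ} (hx : x ≠ 0) (hπ : |x| ≤ π) : cos x < 1 := by
  refine (cos_le_one x).lt_of_ne fun h => hx ?_
  rw [abs_le] at hπ
  exact (cos_eq_one_iff_of_lt_of_lt (by linarith [pi_pos]) (by linarith [pi_pos])).1 h

def wronskian (u v : EuclideanSpace ℝ (Fin 2)) : ℝ := u 0 * v 1 - u 1 * v 0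

theorem inner_sq_add_wronskian_sq (u v : EuclideanSpace ℝ (Fin 2)) :
    inner ℝ u v ^ 2 + wronskian u v ^ 2 = ‖u‖ ^ 2 * ‖v‖ ^ 2 := by
  simp only [wronskian, EuclideanSpace.norm_sq_eq, PiLp.inner_apply, Fin.sum_univ_two,
    Real.norm_eq_abs, sq_abs, RCLike.inner_apply, conj_trivial]
  ring

section Trajectory

variable {E : Type*} [NormedAddCommGroup E] [InnerProductSpace ℝ E] {β : ℝ} {w : ℝ → E}

theorem hasDerivAt_deriv_of_deriv_deriv_eq (hw : ContDiff ℝ 2 w)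
    (hODE : ∀ t, deriv (deriv w) t = β ^ 2 • w t) (t : ℝ) :
    HasDerivAt (deriv w) (β ^ 2 • w t) t := by
  have hw' : ContDiff ℝ 1 (deriv w) := (contDiff_succ_iff_deriv.1 (by exact hw)).2.2
  exact hODE t ▸ (hw'.differentiable one_ne_zero t).hasDerivAt

theorem hasDerivAt_inner_deriv (hw : ContDiff ℝ 2 w)
    (hODE : ∀ t, deriv (deriv w) t = β ^ 2 • w t) (t : ℝ) :
    HasDerivAt (fun t => inner ℝ (w t) (deriv w t)) (‖deriv w t‖ ^ 2 + β ^ 2 * ‖w t‖ ^ 2) t := by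
  refine ((hw.differentiable two_ne_zero t).hasDerivAt.inner ℝ
    (hasDerivAt_deriv_of_deriv_deriv_eq hw hODE t)).congr_deriv ?_
  rw [real_inner_smul_right, real_inner_self_eq_norm_sq, real_inner_self_eq_norm_sq]
  ring

theorem sq_mul_norm_sq_sub_norm_deriv_sq_eq (hw : ContDiff ℝ 2 w)
    (hODE : ∀ t, deriv (deriv w) t = β ^ 2 • w t) (t : ℝ) :
    β ^ 2 * ‖w t‖ ^ 2 - ‖deriv w t‖ ^ 2 = β ^ 2 * ‖w 0‖ ^ 2 - ‖deriv w 0‖ ^ 2 := by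
  have hderiv : ∀ t, HasDerivAt (fun t => β ^ 2 * ‖w t‖ ^ 2 - ‖deriv w t‖ ^ 2) 0 t := fun t => by
    refine (((hw.differentiable two_ne_zero t).hasDerivAt.norm_sq.const_mul (β ^ 2)).sub
      (hasDerivAt_deriv_of_deriv_deriv_eq hw hODE t).norm_sq).congr_deriv ?_
    rw [real_inner_smul_right, real_inner_comm]
    ring
  exact is_const_of_deriv_eq_zero (fun t => (hderiv t).differentiableAt)
    (fun t => (hderiv t).deriv) t 0

theorem norm_deriv_sq_eq {c : ℝ} (hβ : β ≠ 0) (hw : ContDiff ℝ 2 w)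
    (hODE : ∀ t, deriv (deriv w) t = β ^ 2 • w t)
    (hc : c ^ 2 = 1 - ‖w 0‖ ^ 2 + β⁻¹ ^ 2 * ‖deriv w 0‖ ^ 2) (t : ℝ) :
    ‖deriv w t‖ ^ 2 = β ^ 2 * (‖w t‖ ^ 2 - 1 + c ^ 2) := by
  have hE := sq_mul_norm_sq_sub_norm_deriv_sq_eq hw hODE t
  rw [hc]
  field_simp
  linear_combination -hE

end Trajectory

theorem wronskian_eq_wronskian_zero {β : ℝ} {w : ℝ → EuclideanSpace ℝ (Fin 2)}
    (hw : ContDiff ℝ 2 w) (hODE : ∀ t, deriv (deriv w) t = β ^ 2 • w t) (t : ℝ) :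
    wronskian (w t) (deriv w t) = wronskian (w 0) (deriv w 0) := by
  have hcomp : ∀ {v : ℝ → EuclideanSpace ℝ (Fin 2)} {v' : EuclideanSpace ℝ (Fin 2)} {t : ℝ}
      (i : Fin 2), HasDerivAt v v' t → HasDerivAt (fun t => v t i) (v' i) t := fun i h =>
    (EuclideanSpace.proj (𝕜 := ℝ) i).hasFDerivAt.comp_hasDerivAt _ h
  have hw' := fun t => (hw.differentiable two_ne_zero t).hasDerivAt
  have hw'' := hasDerivAt_deriv_of_deriv_deriv_eq hw hODE
  have hderiv : ∀ t, HasDerivAt (fun t => wronskian (w t) (deriv w t)) 0 t := fun t => by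
    refine (((hcomp 0 (hw' t)).mul (hcomp 1 (hw'' t))).sub
      ((hcomp 1 (hw' t)).mul (hcomp 0 (hw'' t)))).congr_deriv ?_
    simp only [WithLp.ofLp_smul, Pi.smul_apply, smul_eq_mul]
    ring
  exact is_const_of_deriv_eq_zero (fun t => (hderiv t).differentiableAt)
    (fun t => (hderiv t).deriv) t 0

namespace CuspAngle

variable {β c k : ℝ}

theorem sq_add_mul_one_sub_pos {f p : ℝ} (hβ : β ≠ 0) (hc : c ≠ 0) (hk : k ≠ 0)
    (hkf : k ^ 2 < f) (hLag : p ^ 2 + k ^ 2 * c ^ 2 * β ^ 2 = β ^ 2 * f * (f - 1 + c ^ 2)) :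
    0 < p ^ 2 + k ^ 2 * β ^ 2 * (1 - f) := by
  have hf : 0 < f := (sq_nonneg k).trans_lt hkf
  have hpos : 0 < β ^ 2 * f * (f - 1 + c ^ 2) := by rw [← hLag]; positivity
  have hc' : 0 < f - 1 + c ^ 2 := pos_of_mul_pos_right hpos (by positivity)
  have hkf' : 0 < f - k ^ 2 := sub_pos.2 hkf
  rw [show p ^ 2 + k ^ 2 * β ^ 2 * (1 - f) = β ^ 2 * (f - k ^ 2) * (f - 1 + c ^ 2) by
    linear_combination hLag]
  positivity

theorem abs_div_le_angle_deriv {f p : ℝ} (hβ : 0 < β) (hc : c ≠ 0) (hk : k ≠ 0)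
    (hkf : k ^ 2 < f) (hf1 : f < 1)
    (hLag : p ^ 2 + k ^ 2 * c ^ 2 * β ^ 2 = β ^ 2 * f * (f - 1 + c ^ 2)) :
    |k * (β * √(1 - f)) / (f - k ^ 2)| ≤
      |k| * β * (β ^ 2 * (2 * f - 1 + c ^ 2) * (1 - f) + p ^ 2) /
        (√(1 - f) * (p ^ 2 + k ^ 2 * β ^ 2 * (1 - f))) := by
  have hB : 0 < √(1 - f) := sqrt_pos.2 (by linarith)
  have hB2 : √(1 - f) ^ 2 = 1 - f := sq_sqrt (by linarith)
  have hden := sq_add_mul_one_sub_pos hβ.ne' hc hk hkf hLag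
  have hkf' : 0 < f - k ^ 2 := sub_pos.2 hkf
  have key : (1 - f) * (p ^ 2 + k ^ 2 * β ^ 2 * (1 - f)) + (β * c * (f - k ^ 2)) ^ 2 =
      (β ^ 2 * (2 * f - 1 + c ^ 2) * (1 - f) + p ^ 2) * (f - k ^ 2) := by
    linear_combination (1 - 2 * f + k ^ 2) * hLag
  rw [abs_div, abs_mul, abs_of_pos hkf', abs_of_pos (by positivity : 0 < β * √(1 - f)),
    div_le_div_iff₀ hkf' (by positivity)]
  calc |k| * (β * √(1 - f)) * (√(1 - f) * (p ^ 2 + k ^ 2 * β ^ 2 * (1 - f)))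
      = |k| * β * (√(1 - f) ^ 2 * (p ^ 2 + k ^ 2 * β ^ 2 * (1 - f))) := by ring
    _ = |k| * β * ((1 - f) * (p ^ 2 + k ^ 2 * β ^ 2 * (1 - f))) := by rw [hB2]
    _ ≤ |k| * β * ((β ^ 2 * (2 * f - 1 + c ^ 2) * (1 - f) + p ^ 2) * (f - k ^ 2)) := by
      rw [← key]; gcongr; exact le_add_of_nonneg_right (sq_nonneg _)
    _ = _ := by ring

variable {F P : ℝ → ℝ}

theorem hasDerivAt_arctan_div_sqrt {x P' : ℝ} (hβ : 0 < β) (hk : k ≠ 0)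
    (hF : HasDerivAt F (2 * P x) x) (hP : HasDerivAt P P' x) (hF1 : F x < 1) :
    HasDerivAt (fun t => arctan (P t / (|k| * β * √(1 - F t))))
      (|k| * β * (P' * (1 - F x) + P x ^ 2) /
        (√(1 - F x) * (P x ^ 2 + k ^ 2 * β ^ 2 * (1 - F x)))) x := by
  have hB : 0 < √(1 - F x) := sqrt_pos.2 (by linarith)
  have hB2 : √(1 - F x) ^ 2 = 1 - F x := sq_sqrt (by linarith)
  have hBd : HasDerivAt (fun t => √(1 - F t)) (-(2 * P x) / (2 * √(1 - F x))) x := by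
    simpa using (hF.const_sub 1).sqrt (by linarith)
  refine ((hP.div (hBd.const_mul (|k| * β)) (by positivity)).arctan).congr_deriv ?_
  have hk' : 0 < |k| := abs_pos.2 hk
  have h1F : 0 < 1 - F x := by linarith
  simp only [Pi.div_apply]
  field_simp
  rw [sq_abs, hB2]
  ring

theorem lt_one_of_mem_Ioo {a b x : ℝ} (hβ : β ≠ 0) (hc : c ≠ 0)
    (hF : ∀ t, HasDerivAt F (2 * P t) t)
    (hLag : ∀ t, P t ^ 2 + k ^ 2 * c ^ 2 * β ^ 2 = β ^ 2 * F t * (F t - 1 + c ^ 2))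
    (hkF : ∀ t ∈ Icc a b, k ^ 2 < F t) (hF1 : ∀ t ∈ Icc a b, F t ≤ 1) (hx : x ∈ Ioo a b) :
    F x < 1 := by
  refine (hF1 x (Ioo_subset_Icc_self hx)).lt_of_ne fun hx1 => ?_
  have hmax : IsLocalMax F x :=
    Filter.mem_of_superset (Icc_mem_nhds hx.1 hx.2) fun t ht => (hF1 t ht).trans hx1.ge
  have hP0 : P x = 0 := by linarith [hmax.hasDerivAt_eq_zero (hF x)]
  have hk1 : k ^ 2 < 1 := hx1 ▸ hkF x (Ioo_subset_Icc_self hx)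
  have hLx := hLag x
  rw [hP0, hx1] at hLx
  have h : (1 - k ^ 2) * (c ^ 2 * β ^ 2) = 0 := by linear_combination -hLx
  rcases mul_eq_zero.1 h with h | h
  · linarith
  · exact absurd h (by positivity)

theorem abs_integral_le_pi {s : ℝ} (hβ : 0 < β) (hc : c ≠ 0) (hk : k ≠ 0) (hs : 0 ≤ s)
    (hF : ∀ t, HasDerivAt F (2 * P t) t) (hP : ∀ t, HasDerivAt P (β ^ 2 * (2 * F t - 1 + c ^ 2)) t)
    (hLag : ∀ t, P t ^ 2 + k ^ 2 * c ^ 2 * β ^ 2 = β ^ 2 * F t * (F t - 1 + c ^ 2))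
    (hkF : ∀ t ∈ Icc 0 s, k ^ 2 < F t) (hF1 : ∀ t ∈ Ioo 0 s, F t < 1) :
    |∫ t in 0..s, k * (β * √(1 - F t)) / (F t - k ^ 2)| ≤ π := by
  have hFc : Continuous F := continuous_iff_continuousAt.2 fun t => (hF t).continuousAt
  have hPc : Continuous P := continuous_iff_continuousAt.2 fun t => (hP t).continuousAt
  have hgc : ContinuousOn (fun t => k * (β * √(1 - F t)) / (F t - k ^ 2)) (Icc 0 s) :=
    ContinuousOn.div (by fun_prop) (by fun_prop) fun t ht => (sub_pos.2 (hkF t ht)).ne'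
  set Θ := fun t => arcsin (P t / √(P t ^ 2 + k ^ 2 * β ^ 2 * (1 - F t)))
  have hΘc : ContinuousOn Θ (Icc 0 s) :=
    continuous_arcsin.comp_continuousOn <| ContinuousOn.div (by fun_prop) (by fun_prop)
      fun t ht => (sqrt_pos.2 (sq_add_mul_one_sub_pos hβ.ne' hc hk (hkF t ht) (hLag t))).ne'
  have hΘ : ∀ x ∈ Ioo 0 s, HasDerivAt Θ
      (|k| * β * (β ^ 2 * (2 * F x - 1 + c ^ 2) * (1 - F x) + P x ^ 2) /
        (√(1 - F x) * (P x ^ 2 + k ^ 2 * β ^ 2 * (1 - F x)))) x := by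
    intro x hx
    refine (hasDerivAt_arctan_div_sqrt hβ hk (hF x) (hP x) (hF1 x hx)).congr_of_eventuallyEq ?_
    filter_upwards [isOpen_Ioo.mem_nhds hx] with t ht
    have hB : 0 < √(1 - F t) := sqrt_pos.2 (by linarith [hF1 t ht])
    rw [arctan_div_eq_arcsin (by positivity), mul_pow, mul_pow, sq_abs, sq_sqrt (by linarith [hF1 t ht])]
  have hbound := abs_sub_le_sub_of_abs_deriv_le hs (continuousOn_integral_of_continuousOn hs hgc)
    hΘc (fun x hx => hasDerivAt_integral_of_continuousOn hgc hx) hΘ fun x hx =>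
      abs_div_le_angle_deriv hβ hc hk (hkF x (Ioo_subset_Icc_self hx)) (hF1 x hx) (hLag x)
  rw [intervalIntegral.integral_same, sub_zero] at hbound
  linarith [arcsin_le_pi_div_two (P s / √(P s ^ 2 + k ^ 2 * β ^ 2 * (1 - F s))),
    neg_pi_div_two_le_arcsin (P 0 / √(P 0 ^ 2 + k ^ 2 * β ^ 2 * (1 - F 0)))]

theorem integral_ne_zero {s : ℝ} (hβ : 0 < β) (hk : k ≠ 0) (hs : 0 < s) (hFc : Continuous F)
    (hkF : ∀ t ∈ Icc 0 s, k ^ 2 < F t) (hF1 : ∀ t ∈ Ioo 0 s, F t < 1) :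
    ∫ t in 0..s, k * (β * √(1 - F t)) / (F t - k ^ 2) ≠ 0 := by
  simp_rw [mul_div_assoc k]
  rw [intervalIntegral.integral_const_mul]
  refine mul_ne_zero hk (intervalIntegral.intervalIntegral_pos_of_pos_on ?_ (fun t ht => ?_) hs).ne'
  · refine ContinuousOn.intervalIntegrable_of_Icc hs.le (ContinuousOn.div ?_ ?_ fun t ht => ?_)
    · fun_prop
    · fun_prop
    · exact (sub_pos.2 (hkF t ht)).ne'
  · exact div_pos (mul_pos hβ (sqrt_pos.2 (sub_pos.2 (hF1 t ht))))
      (sub_pos.2 (hkF t (Ioo_subset_Icc_self ht)))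

theorem cos_integral_lt_one {s : ℝ} (hβ : 0 < β) (hc : c ≠ 0) (hk : k ≠ 0) (hs : 0 < s)
    (hF : ∀ t, HasDerivAt F (2 * P t) t) (hP : ∀ t, HasDerivAt P (β ^ 2 * (2 * F t - 1 + c ^ 2)) t)
    (hLag : ∀ t, P t ^ 2 + k ^ 2 * c ^ 2 * β ^ 2 = β ^ 2 * F t * (F t - 1 + c ^ 2))
    (hkF : ∀ t ∈ Icc 0 s, k ^ 2 < F t) (hF1 : ∀ t ∈ Icc 0 s, F t ≤ 1) :
    cos (∫ t in 0..s, k * (β * √(1 - F t)) / (F t - k ^ 2)) < 1 := by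
  have hlt : ∀ t ∈ Ioo 0 s, F t < 1 := fun t ht => lt_one_of_mem_Ioo hβ.ne' hc hF hLag hkF hF1 ht
  exact cos_lt_one_of_abs_le_pi
    (integral_ne_zero hβ hk hs (continuous_iff_continuousAt.2 fun t => (hF t).continuousAt) hkF hlt)
    (abs_integral_le_pi hβ hc hk hs.le hF hP hLag hkF hlt)

end CuspAngle

theorem stmt_18_general (β : ℝ) (hβ : 0 < β)
    (w : ℝ → EuclideanSpace ℝ (Fin 2)) (hw : ContDiff ℝ 2 w)
    (hODE : ∀ s : ℝ, deriv (deriv w) s = β ^ 2 • w s)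
    (W : ℝ) (hWdef : W = (w 0) 0 * (deriv w 0) 1 - (w 0) 1 * (deriv w 0) 0)
    (hW : W ≠ 0)
    (c : ℝ) (hc0 : 0 < c)
    (hc : c ^ 2 = 1 - ‖w 0‖ ^ 2 + β⁻¹ ^ 2 * ‖deriv w 0‖ ^ 2)
    (s : ℝ) (hs : 0 < s)
    (hw1 : ∀ σ ∈ Set.Icc 0 s, ‖w σ‖ ≤ 1)
    (hwq : ∀ σ ∈ Set.Icc 0 s, W ^ 2 < c ^ 2 * β ^ 2 * ‖w σ‖ ^ 2)
    (φ : ℝ → ℝ)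
    (hφ : ∀ t : ℝ, φ t = ∫ σ in (0:ℝ)..t,
      (W / (c * β)) * Real.sqrt (c ^ 2 * β ^ 2 - ‖deriv w σ‖ ^ 2) /
        (‖w σ‖ ^ 2 - W ^ 2 / (c ^ 2 * β ^ 2))) :
    Real.sqrt ((‖w s‖ ^ 2 - W ^ 2 / (c ^ 2 * β ^ 2)) / (1 - W ^ 2 / (c ^ 2 * β ^ 2))) *
      Real.cos (φ s) < 1 := by
  set k := W / (c * β)
  have hWk : W = k * c * β := by simp only [k]; field_simp
  have hk2 : W ^ 2 / (c ^ 2 * β ^ 2) = k ^ 2 := by rw [div_pow, mul_pow]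
  have hN := norm_deriv_sq_eq hβ.ne' hw hODE hc
  have hLag : ∀ t, inner ℝ (w t) (deriv w t) ^ 2 + k ^ 2 * c ^ 2 * β ^ 2 =
      β ^ 2 * ‖w t‖ ^ 2 * (‖w t‖ ^ 2 - 1 + c ^ 2) := fun t => by
    have := inner_sq_add_wronskian_sq (w t) (deriv w t)
    rw [wronskian_eq_wronskian_zero hw hODE t, wronskian, ← hWdef, hWk, hN t] at this
    linear_combination this
  have hkF : ∀ t ∈ Icc 0 s, k ^ 2 < ‖w t‖ ^ 2 := fun t ht => by
    rw [← hk2, div_lt_iff₀ (by positivity)]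
    linarith [hwq t ht]
  have hF1 : ∀ t ∈ Icc 0 s, ‖w t‖ ^ 2 ≤ 1 := fun t ht => pow_le_one₀ (norm_nonneg _) (hw1 t ht)
  have hs' : s ∈ Icc 0 s := right_mem_Icc.2 hs.le
  rw [hk2]
  rcases (hF1 s hs').lt_or_eq with hlt | heq
  · have : √((‖w s‖ ^ 2 - k ^ 2) / (1 - k ^ 2)) < 1 := by
      rw [sqrt_lt' one_pos, one_pow, div_lt_one (by linarith [hkF s hs'])]
      linarith
    nlinarith [cos_le_one (φ s), sqrt_nonneg ((‖w s‖ ^ 2 - k ^ 2) / (1 - k ^ 2))]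
  · have hintegrand : ∀ σ, k * √(c ^ 2 * β ^ 2 - ‖deriv w σ‖ ^ 2) /
        (‖w σ‖ ^ 2 - W ^ 2 / (c ^ 2 * β ^ 2)) = k * (β * √(1 - ‖w σ‖ ^ 2)) / (‖w σ‖ ^ 2 - k ^ 2) :=
      fun σ => by
        rw [hN σ, hk2, show c ^ 2 * β ^ 2 - β ^ 2 * (‖w σ‖ ^ 2 - 1 + c ^ 2) =
          β ^ 2 * (1 - ‖w σ‖ ^ 2) by ring, sqrt_mul (sq_nonneg β), sqrt_sq hβ.le]
    rw [heq, div_self (by linarith [hkF s hs']), sqrt_one, one_mul, hφ]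
    simp_rw [hintegrand]
    exact CuspAngle.cos_integral_lt_one hβ hc0.ne' (div_ne_zero hW (by positivity)) hs
      (fun t => (hw.differentiable two_ne_zero t).hasDerivAt.norm_sq)
      (fun t => (hasDerivAt_inner_deriv hw hODE t).congr_deriv (by rw [hN t]; ring)) hLag hkF hF1

/-- Along a normalized-curvature trajectory `w` (a C² curve in ℝ² with
`w'' = β² w`) departing from a cusp (`‖w(0)‖ = 1`, `w(0)·w'(0) < 0`) with nonzero
Wronskian `W` and `𝔠 > 0`, if `‖w‖ ≤ 1` and `𝔠²β²‖w‖² > W²` on `[0,s]` with `s > 0`,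
then `√((‖w(s)‖² − W²/(𝔠²β²))/(1 − W²/(𝔠²β²))) · cos φ(s) < 1`; i.e. the geodesic
departing from a cusp has strictly positive z-component. -/
theorem stmt_18 (β : ℝ) (hβ : 0 < β)
    (w : ℝ → EuclideanSpace ℝ (Fin 2)) (hw : ContDiff ℝ 2 w)
    (hODE : ∀ s : ℝ, deriv (deriv w) s = β ^ 2 • w s)
    (hw0 : ‖w 0‖ = 1)
    (hneg : (inner ℝ (w 0) (deriv w 0) : ℝ) < 0)
    (W : ℝ) (hWdef : W = (w 0) 0 * (deriv w 0) 1 - (w 0) 1 * (deriv w 0) 0)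
    (hW : W ≠ 0)
    (c : ℝ) (hc0 : 0 < c)
    (hc : c ^ 2 = 1 - ‖w 0‖ ^ 2 + β⁻¹ ^ 2 * ‖deriv w 0‖ ^ 2)
    (s : ℝ) (hs : 0 < s)
    (hw1 : ∀ σ ∈ Set.Icc 0 s, ‖w σ‖ ≤ 1)
    (hwq : ∀ σ ∈ Set.Icc 0 s, W ^ 2 < c ^ 2 * β ^ 2 * ‖w σ‖ ^ 2)
    (φ : ℝ → ℝ)
    (hφ : ∀ t : ℝ, φ t = ∫ σ in (0:ℝ)..t,
      (W / (c * β)) * Real.sqrt (c ^ 2 * β ^ 2 - ‖deriv w σ‖ ^ 2) /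
        (‖w σ‖ ^ 2 - W ^ 2 / (c ^ 2 * β ^ 2))) :
    Real.sqrt ((‖w s‖ ^ 2 - W ^ 2 / (c ^ 2 * β ^ 2)) / (1 - W ^ 2 / (c ^ 2 * β ^ 2))) *
      Real.cos (φ s) < 1 :=
  stmt_18_general β hβ w hw hODE W hWdef hW c hc0 hc s hs hw1 hwq φ hφ
end
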